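/- arXiv:math/0211360 — 4 statements merged into one kernel-verified Lean document; each statement's English description precedes it below -/
import Mathlib

section
/- Let θ ∈ Θ₊ and let F be a θ-stable G-constellation. Then the subspace F^G of G-invariant vectors is one-dimensional and generates F as an A-module; in particular F is a cyclic A-module, and F is isomorphic as a G-equivariant A-module to A/I for some G-stable ideal I ⊆ A (i.e. F is the structure sheaf of a G-cluster). -/
/-!
Common setup: `G`-constellations for a finite subgroup `G ⊆ GL(n,ℂ)`.

* `polyAct g` is the action of `g ∈ GL(n,ℂ)` on the polynomial ring
  `A = ℂ[x₁,…,xₙ]` given by `(g·f)(x) = f(g⁻¹·x)`.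
* `GMod n G F` is a `G`-equivariant `A`-module structure on the ℂ-vector space `F`:
  an `A`-module structure `actA` (as a ℂ-algebra map `A →ₐ End ℂ F`), a `G`-action
  `actG` by ℂ-linear automorphisms, and the compatibility `g·(f·v) = (g·f)·(g·v)`.
* `IrrChar G` is the set of irreducible complex characters of `G`.
* `multChar ρ χ` is the multiplicity `m_ρ` read off from a character `χ`,
  `thetaOfChar θ χ = Σ_ρ m_ρ(χ)·θ(ρ)`.
* `IsThetaParam G θ` says `θ ∈ Θ`, i.e. `Σ_ρ (dim ρ)·θ(ρ) = 0`;
  `IsThetaPlus G θ` says `θ ∈ Θ₊`.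
* `M.IsSub E` says the ℂ-subspace `E` is a `G`-submodule; `M.subChar E h` is the
  character of the induced `G`-representation on `E`.
* `M.IsConstellation` : `F` is finite dimensional and isomorphic, as a
  `ℂ[G]`-module, to the regular representation `Map(G,ℂ)`.
* `M.IsStable θ` / `M.IsSemistable θ` : `θ(E) > 0` (resp. `≥ 0`) for every
  `G`-submodule `0 ≠ E ≠ F`.
* `IsGHom M M' φ` : `φ` is simultaneously `A`-linear and `G`-equivariant.
-/

open CategoryTheory

noncomputable section

/-- The action of `g ∈ GL(n,ℂ)` on polynomials, `(g·f)(x) = f(g⁻¹·x)`: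
the variable `xᵢ` is replaced by `∑ⱼ (g⁻¹)ᵢⱼ xⱼ`. -/
def polyAct {n : ℕ} (g : GL (Fin n) ℂ) :
    MvPolynomial (Fin n) ℂ →ₐ[ℂ] MvPolynomial (Fin n) ℂ :=
  MvPolynomial.aeval fun i =>
    ∑ j : Fin n, ((g⁻¹ : GL (Fin n) ℂ) : Matrix (Fin n) (Fin n) ℂ) i j • MvPolynomial.X j

/-- A `G`-equivariant module over `A = ℂ[x₁,…,xₙ]` on the ℂ-vector space `F`. -/
structure GMod (n : ℕ) (G : Subgroup (GL (Fin n) ℂ)) (F : Type)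
    [AddCommGroup F] [Module ℂ F] : Type where
  actA : MvPolynomial (Fin n) ℂ →ₐ[ℂ] Module.End ℂ F
  actG : G →* (F ≃ₗ[ℂ] F)
  equivariance : ∀ (g : G) (f : MvPolynomial (Fin n) ℂ) (v : F),
    actG g (actA f v) = actA (polyAct (g : GL (Fin n) ℂ) f) (actG g v)

/-- The irreducible complex characters of `G`. -/
def IrrChar {n : ℕ} (G : Subgroup (GL (Fin n) ℂ)) : Type :=
  {χ : G → ℂ // ∃ V : FDRep ℂ G, Simple V ∧ ∀ g : G, FDRep.character V g = χ g}

/-- The multiplicity `m_ρ` of the irreducible character `ρ` in a character `χ`,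
computed by the usual inner product of characters. -/
def multChar {n : ℕ} {G : Subgroup (GL (Fin n) ℂ)} (ρ : IrrChar G) (χ : G → ℂ) : ℂ :=
  (Nat.card G : ℂ)⁻¹ * ∑ᶠ g : G, ρ.1 g⁻¹ * χ g

/-- `θ(E) = Σ_ρ m_ρ(E)·θ(ρ)`, computed from the character of `E`. -/
def thetaOfChar {n : ℕ} {G : Subgroup (GL (Fin n) ℂ)}
    (θ : IrrChar G → ℚ) (χ : G → ℂ) : ℂ :=
  ∑ᶠ ρ : IrrChar G, multChar ρ χ * (θ ρ : ℂ)

/-- `θ ∈ Θ`, i.e. `Σ_ρ (dim ρ)·θ(ρ) = 0` (note `dim ρ = ρ(1)`). -/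
def IsThetaParam {n : ℕ} (G : Subgroup (GL (Fin n) ℂ)) (θ : IrrChar G → ℚ) : Prop :=
  ∑ᶠ ρ : IrrChar G, ρ.1 1 * (θ ρ : ℂ) = 0

/-- `θ ∈ Θ₊`, i.e. `θ ∈ Θ` and `θ(ρ) > 0` for every nontrivial `ρ ∈ Irr(G)`. -/
def IsThetaPlus {n : ℕ} (G : Subgroup (GL (Fin n) ℂ)) (θ : IrrChar G → ℚ) : Prop :=
  IsThetaParam G θ ∧ ∀ ρ : IrrChar G, ρ.1 ≠ (fun _ => (1 : ℂ)) → 0 < θ ρ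

namespace GMod

variable {n : ℕ} {G : Subgroup (GL (Fin n) ℂ)} {F F' : Type}
  [AddCommGroup F] [Module ℂ F] [AddCommGroup F'] [Module ℂ F']

/-- The character of the `G`-representation `F`. -/
def char (M : GMod n G F) : G → ℂ :=
  fun g => LinearMap.trace ℂ F ↑(M.actG g)

/-- `E` is a `G`-submodule: a subspace stable under the `A`-action and the `G`-action. -/
def IsSub (M : GMod n G F) (E : Submodule ℂ F) : Prop :=
  (∀ (f : MvPolynomial (Fin n) ℂ) (v : F), v ∈ E → M.actA f v ∈ E) ∧
  (∀ (g : G) (v : F), v ∈ E → M.actG g v ∈ E)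

/-- The character of the `G`-representation on a `G`-stable subspace `E`. -/
def subChar (M : GMod n G F) (E : Submodule ℂ F)
    (h : ∀ (g : G) (v : F), v ∈ E → M.actG g v ∈ E) : G → ℂ :=
  fun g => LinearMap.trace ℂ E
    ((↑(M.actG g) : F →ₗ[ℂ] F).restrict (p := E) (q := E) (fun v hv => by exact h g v hv))

/-- `F` is a `G`-constellation: finite dimensional and isomorphic as a `ℂ[G]`-module
to the regular representation `Map(G,ℂ)` (with `(g·φ)(h) = φ(g⁻¹h)`). -/
def IsConstellation (M : GMod n G F) : Prop :=
  FiniteDimensional ℂ F ∧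
  ∃ e : F ≃ₗ[ℂ] (G → ℂ), ∀ (g : G) (v : F) (h : G), e (M.actG g v) h = e v (g⁻¹ * h)

/-- `θ`-stability: `θ(E) > 0` for every `G`-submodule `0 ≠ E ≠ F`. -/
def IsStable (M : GMod n G F) (θ : IrrChar G → ℚ) : Prop :=
  ∀ (E : Submodule ℂ F) (hE : M.IsSub E), E ≠ ⊥ → E ≠ ⊤ →
    0 < (thetaOfChar θ (M.subChar E hE.2)).re

/-- `θ`-semistability: `θ(E) ≥ 0` for every `G`-submodule `0 ≠ E ≠ F`. -/
def IsSemistable (M : GMod n G F) (θ : IrrChar G → ℚ) : Prop :=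
  ∀ (E : Submodule ℂ F) (hE : M.IsSub E), E ≠ ⊥ → E ≠ ⊤ →
    0 ≤ (thetaOfChar θ (M.subChar E hE.2)).re

/-- The subspace `F^G` of `G`-invariant vectors. -/
def invariants (M : GMod n G F) : Submodule ℂ F where
  carrier := {v | ∀ g : G, M.actG g v = v}
  add_mem' := by
    intro a b ha hb
    intro g
    rw [map_add, ha g, hb g]
  zero_mem' := by
    intro g
    rw [map_zero]
  smul_mem' := by
    intro c v hv
    intro g
    rw [map_smul, hv g]

/-- The `A`-submodule of `F` generated by a subset `s ⊆ F`. -/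
def aspan (M : GMod n G F) (s : Set F) : Submodule ℂ F :=
  Submodule.span ℂ {w | ∃ (f : MvPolynomial (Fin n) ℂ) (v : F), v ∈ s ∧ w = M.actA f v}

end GMod

/-- `φ : F → F'` is simultaneously `A`-linear and `G`-equivariant. -/
def IsGHom {n : ℕ} {G : Subgroup (GL (Fin n) ℂ)} {F F' : Type}
    [AddCommGroup F] [Module ℂ F] [AddCommGroup F'] [Module ℂ F']
    (M : GMod n G F) (M' : GMod n G F') (φ : F →ₗ[ℂ] F') : Prop :=
  (∀ (f : MvPolynomial (Fin n) ℂ) (v : F), φ (M.actA f v) = M'.actA f (φ v)) ∧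
  (∀ (g : G) (v : F), φ (M.actG g v) = M'.actG g (φ v))

end

/-!
The `G`-invariant vectors of a `G`-constellation correspond to the constant functions under
`F ≅ ℂ[G]`, so `F^G` is a line `ℂ v₀`. Let `E = A·v₀`. For every `ρ ∈ Irr(G)` the multiplicity
`m_ρ(E)` is the dimension of `Hom_G(ρ, E) ⊆ Hom_G(ρ, F)`, hence `m_ρ(E) ≤ m_ρ(F) = dim ρ`, with
equality for `ρ = ρ₀` because `E ⊇ F^G`. Since `θ(ρ) > 0` for `ρ ≠ ρ₀`, this gives
`θ(E) ≤ θ(F) = Σ_ρ (dim ρ) θ(ρ) = 0`, so stability forces `E = F`. Then `f ↦ f·v₀` identifies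
`F` with `A/I` for its kernel `I`.
-/

open Module Representation

namespace Representation

variable {G V W : Type*} [Group G] [AddCommGroup V] [Module ℂ V] [AddCommGroup W] [Module ℂ W]

theorem finrank_invariants_subrepresentation {σ : Representation ℂ G W}
    (E : Subrepresentation σ) (hE : σ.invariants ≤ E.toSubmodule) :
    finrank ℂ E.toRepresentation.invariants = finrank ℂ σ.invariants := by
  suffices E.toRepresentation.invariants.map E.toSubmodule.subtype = σ.invariants by
    rw [← this, Submodule.finrank_map_subtype_eq]
  ext v
  constructor
  · rintro ⟨w, hw, rfl⟩ g
    exact congrArg Subtype.val (hw g)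
  · intro hv
    exact ⟨⟨v, hE hv⟩, fun g => Subtype.ext (hv g), rfl⟩

theorem finrank_intertwiningMap_subrepresentation_le [FiniteDimensional ℂ V]
    [FiniteDimensional ℂ W] (ρ : Representation ℂ G V) {σ : Representation ℂ G W}
    (E : Subrepresentation σ) :
    finrank ℂ (IntertwiningMap ρ E.toRepresentation) ≤ finrank ℂ (IntertwiningMap ρ σ) := by
  let ι : IntertwiningMap E.toRepresentation σ := ⟨E.toSubmodule.subtype, fun _ => rfl⟩
  refine LinearMap.finrank_le_finrank_of_injective (f := IntertwiningMap.llcomp _ _ _ ι) ?_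
  intro φ ψ h
  ext v
  exact congrArg (fun χ : IntertwiningMap ρ σ => χ v) h

end Representation

section Multiplicity

variable {n : ℕ} {G : Subgroup (GL (Fin n) ℂ)} [Fintype G]
  {W : Type*} [AddCommGroup W] [Module ℂ W] [FiniteDimensional ℂ W]

noncomputable local instance : Invertible (Nat.card G : ℂ) :=
  invertibleOfNonzero (Nat.cast_ne_zero.mpr Nat.card_pos.ne')

theorem multChar_eq_sum (ρ : IrrChar G) (χ : G → ℂ) :
    multChar ρ χ = (Nat.card G : ℂ)⁻¹ * ∑ g, ρ.1 g⁻¹ * χ g := by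
  rw [multChar, finsum_eq_sum_of_fintype]

theorem multChar_character_eq_finrank_intertwiningMap (ρ : IrrChar G) {V : FDRep ℂ G}
    (hV : ∀ g, V.character g = ρ.1 g) (σ : Representation ℂ G W) :
    multChar ρ σ.character = finrank ℂ (IntertwiningMap V.ρ σ) := by
  rw [multChar_eq_sum, ← card_inv_mul_sum_char_mul_char_eq_finrank]
  simp only [← hV, mul_comm (σ.character _)]
  rfl

theorem multChar_character_of_trivial (ρ : IrrChar G) (hρ : ρ.1 = fun _ => 1)
    (σ : Representation ℂ G W) :
    multChar ρ σ.character = finrank ℂ σ.invariants := by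
  rw [multChar_eq_sum, ← card_inv_mul_sum_char_eq_finrank, hρ]
  simp only [one_mul]

open scoped Classical in
theorem multChar_character_of_simple (ρ : IrrChar G) {V V' : FDRep ℂ G} [Simple V] [Simple V']
    (hV : ∀ g, V.character g = ρ.1 g) :
    multChar ρ V'.character = if Nonempty (V' ≅ V) then 1 else 0 := by
  rw [multChar_eq_sum, ← FDRep.char_orthonormal V' V]
  simp only [← hV, mul_comm (V.character _)]

noncomputable def multCharLinear (ρ : IrrChar G) : (G → ℂ) →ₗ[ℂ] ℂ where
  toFun := multChar ρ
  map_add' χ ψ := by simp only [multChar_eq_sum, Pi.add_apply, mul_add, Finset.sum_add_distrib]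
  map_smul' c χ := by
    simp only [multChar_eq_sum, Pi.smul_apply, smul_eq_mul, Finset.mul_sum, RingHom.id_apply]
    congr 1
    ext g
    ring

end Multiplicity

instance IrrChar.finite {n : ℕ} {G : Subgroup (GL (Fin n) ℂ)} [Finite G] :
    Finite (IrrChar G) := by
  classical
  cases nonempty_fintype G
  refine (LinearIndependent.of_pairwise_dual_eq_zero_one (fun ρ : IrrChar G => ρ.1)
    multCharLinear ?_ ?_).finite
  · intro ρ ρ' hne
    obtain ⟨V, _, hV⟩ := ρ.2
    obtain ⟨V', _, hV'⟩ := ρ'.2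
    have hiso : ¬ Nonempty (V' ≅ V) := fun ⟨i⟩ =>
      hne (Subtype.ext (funext fun g => by rw [← hV, ← hV', FDRep.char_iso i])).symm
    change multChar ρ ρ'.1 = 0
    rw [show ρ'.1 = V'.character from funext fun g => (hV' g).symm,
      multChar_character_of_simple ρ hV, if_neg hiso]
  · intro ρ
    obtain ⟨V, _, hV⟩ := ρ.2
    change multChar ρ ρ.1 = 1
    rw [show ρ.1 = V.character from funext fun g => (hV g).symm,
      multChar_character_of_simple ρ hV, if_pos ⟨Iso.refl V⟩]

theorem re_thetaOfChar_subrepresentation_le {n : ℕ} {G : Subgroup (GL (Fin n) ℂ)} [Fintype G]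
    {W : Type*} [AddCommGroup W] [Module ℂ W] [FiniteDimensional ℂ W] (θ : IrrChar G → ℚ)
    (hθ : ∀ ρ : IrrChar G, ρ.1 ≠ (fun _ => 1) → 0 < θ ρ) {σ : Representation ℂ G W}
    (E : Subrepresentation σ) (hE : σ.invariants ≤ E.toSubmodule) :
    (thetaOfChar θ E.toRepresentation.character).re ≤ (thetaOfChar θ σ.character).re := by
  have := Fintype.ofFinite (IrrChar G)
  simp only [thetaOfChar, finsum_eq_sum_of_fintype, Complex.re_sum]
  refine Finset.sum_le_sum fun ρ _ => ?_
  by_cases hρ : ρ.1 = fun _ => 1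
  · rw [multChar_character_of_trivial ρ hρ, multChar_character_of_trivial ρ hρ,
      finrank_invariants_subrepresentation E hE]
  · obtain ⟨V, -, hV⟩ := ρ.2
    rw [multChar_character_eq_finrank_intertwiningMap ρ hV,
      multChar_character_eq_finrank_intertwiningMap ρ hV]
    have hle := finrank_intertwiningMap_subrepresentation_le V.ρ E
    have hpos := hθ ρ hρ
    simp only [Complex.mul_re, Complex.natCast_re, Complex.ratCast_re, Complex.natCast_im,
      Complex.ratCast_im, mul_zero, sub_zero]
    gcongr

namespace GMod

variable {n : ℕ} {G : Subgroup (GL (Fin n) ℂ)} {F : Type} [AddCommGroup F] [Module ℂ F]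
  (M : GMod n G F)

/-- `M.char` and `M.subChar E _` are by definition the characters of `M.rep` and of
`(M.subrep E _).toRepresentation`. -/
def rep : Representation ℂ G F :=
  LinearEquiv.automorphismGroup.toLinearMapMonoidHom.comp M.actG

def subrep (E : Submodule ℂ F) (hE : ∀ (g : G) (v : F), v ∈ E → M.actG g v ∈ E) :
    Subrepresentation M.rep :=
  ⟨E, fun g v hv => hE g v hv⟩

section Regular

variable {M} (e : F ≃ₗ[ℂ] (G → ℂ))

theorem invariants_eq_span_singleton_of_regular
    (he : ∀ (g : G) (v : F) (h : G), e (M.actG g v) h = e v (g⁻¹ * h)) :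
    M.invariants = ℂ ∙ e.symm (fun _ => 1) := by
  refine le_antisymm (fun v hv => Submodule.mem_span_singleton.mpr ⟨e v 1, ?_⟩) ?_
  · apply e.injective
    funext h
    have hconst := he h v h
    rw [hv h, inv_mul_cancel] at hconst
    simp [hconst]
  · rw [Submodule.span_le, Set.singleton_subset_iff]
    intro g
    apply e.injective
    funext h
    rw [he, e.apply_symm_apply]

theorem char_of_regular [Fintype G] [DecidableEq G]
    (he : ∀ (g : G) (v : F) (h : G), e (M.actG g v) h = e v (g⁻¹ * h)) (g : G) :
    M.char g = if g = 1 then (Nat.card G : ℂ) else 0 := by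
  have hconj : (M.actG g : F →ₗ[ℂ] F) = e.symm.conj (LinearMap.funLeft ℂ ℂ (g⁻¹ * ·)) := by
    ext v
    apply e.injective
    funext h
    simp [LinearEquiv.conj_apply, he]
  rw [char, hconj, LinearMap.trace_conj', LinearMap.trace_eq_matrix_trace ℂ (Pi.basisFun ℂ G),
    Matrix.trace]
  simp [Pi.single_apply]

theorem exists_invariants_eq_span_singleton (hcon : M.IsConstellation) :
    ∃ v : F, v ≠ 0 ∧ M.invariants = ℂ ∙ v := by
  obtain ⟨-, e, he⟩ := hcon
  refine ⟨e.symm fun _ => 1, fun h => ?_, invariants_eq_span_singleton_of_regular e he⟩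
  simpa using congrFun (congrArg e h) 1

end Regular

theorem multChar_char_of_isConstellation [Fintype G] (hcon : M.IsConstellation)
    (ρ : IrrChar G) : multChar ρ M.char = ρ.1 1 := by
  classical
  obtain ⟨-, e, he⟩ := hcon
  simp only [multChar_eq_sum, char_of_regular e he, mul_ite, mul_zero, Finset.sum_ite_eq',
    Finset.mem_univ, if_true, inv_one]
  field_simp

theorem thetaOfChar_char_of_isConstellation [Fintype G] {θ : IrrChar G → ℚ}
    (hθ : IsThetaParam G θ) (hcon : M.IsConstellation) : thetaOfChar θ M.char = 0 := by
  simp only [thetaOfChar, M.multChar_char_of_isConstellation hcon]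
  exact hθ

theorem subset_aspan (s : Set F) : s ⊆ M.aspan s := fun v hv =>
  Submodule.subset_span ⟨1, v, hv, by rw [map_one, Module.End.one_apply]⟩

theorem aspan_span_singleton (v : F) : M.aspan (ℂ ∙ v : Submodule ℂ F) = M.aspan {v} := by
  refine le_antisymm (Submodule.span_le.mpr ?_)
    (Submodule.span_mono fun w ⟨f, u, hu, hw⟩ => ⟨f, u, Submodule.subset_span hu, hw⟩)
  rintro _ ⟨f, u, hu, rfl⟩
  obtain ⟨c, rfl⟩ := Submodule.mem_span_singleton.mp hu
  rw [map_smul]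
  exact Submodule.smul_mem _ c (Submodule.subset_span ⟨f, v, rfl, rfl⟩)

theorem isSub_aspan (s : Set F) (hs : ∀ (g : G), ∀ v ∈ s, M.actG g v ∈ s) :
    M.IsSub (M.aspan s) := by
  constructor
  · intro f v hv
    refine (Submodule.span_le (p := (M.aspan s).comap (M.actA f)) |>.mpr ?_) hv
    rintro _ ⟨f', u, hu, rfl⟩
    exact Submodule.subset_span ⟨f * f', u, hu, by rw [map_mul, Module.End.mul_apply]⟩
  · intro g v hv
    refine (Submodule.span_le (p := (M.aspan s).comap (M.actG g).toLinearMap) |>.mpr ?_) hv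
    rintro _ ⟨f, u, hu, rfl⟩
    exact Submodule.subset_span ⟨_, _, hs g u hu, M.equivariance g f u⟩

theorem aspan_invariants_eq_top [Fintype G] {θ : IrrChar G → ℚ} (hθ : IsThetaPlus G θ)
    (hcon : M.IsConstellation) (hstab : M.IsStable θ) :
    M.aspan M.invariants = ⊤ := by
  have := hcon.1
  have hsub : M.IsSub (M.aspan M.invariants) :=
    M.isSub_aspan _ fun g v hv => (hv g).symm ▸ hv
  have hle : M.invariants ≤ M.aspan M.invariants := M.subset_aspan _
  obtain ⟨v, hv, hinv⟩ := M.exists_invariants_eq_span_singleton hcon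
  have hbot : M.aspan M.invariants ≠ ⊥ :=
    ne_bot_of_le_ne_bot (by simpa [hinv] using hv) hle
  by_contra hne
  refine (hstab _ hsub hbot hne).not_ge ?_
  calc (thetaOfChar θ (M.subChar _ hsub.2)).re ≤ (thetaOfChar θ M.char).re :=
        re_thetaOfChar_subrepresentation_le θ hθ.2 (M.subrep _ hsub.2) hle
    _ = 0 := by rw [M.thetaOfChar_char_of_isConstellation hθ.1 hcon, Complex.zero_re]

noncomputable def toSpanSingleton (v : F) : MvPolynomial (Fin n) ℂ →ₗ[ℂ] F :=
  (LinearMap.applyₗ v).comp M.actA.toLinearMap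

theorem toSpanSingleton_mul (v : F) (f a : MvPolynomial (Fin n) ℂ) :
    M.toSpanSingleton v (f * a) = M.actA f (M.toSpanSingleton v a) := by
  simp [toSpanSingleton]

theorem toSpanSingleton_polyAct {v : F} (hv : v ∈ M.invariants) (g : G)
    (f : MvPolynomial (Fin n) ℂ) :
    M.toSpanSingleton v (polyAct (g : GL (Fin n) ℂ) f) = M.actG g (M.toSpanSingleton v f) := by
  simp [toSpanSingleton, M.equivariance, hv g]

theorem range_toSpanSingleton (v : F) :
    LinearMap.range (M.toSpanSingleton v) = M.aspan {v} := by
  refine le_antisymm ?_ (Submodule.span_le.mpr ?_)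
  · rintro _ ⟨f, rfl⟩
    exact Submodule.subset_span ⟨f, v, rfl, rfl⟩
  · rintro _ ⟨f, _, rfl, rfl⟩
    exact ⟨f, rfl⟩

def annihilator (v : F) : Ideal (MvPolynomial (Fin n) ℂ) where
  carrier := {f | M.toSpanSingleton v f = 0}
  add_mem' {f f'} hf hf' := by simp_all
  zero_mem' := by simp
  smul_mem' c f hf := by simp_all [toSpanSingleton_mul]

theorem polyAct_mem_annihilator {v : F} (hv : v ∈ M.invariants) (g : G)
    {f : MvPolynomial (Fin n) ℂ} (hf : f ∈ M.annihilator v) :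
    polyAct (g : GL (Fin n) ℂ) f ∈ M.annihilator v := by
  change M.toSpanSingleton v _ = 0
  rw [M.toSpanSingleton_polyAct hv, show M.toSpanSingleton v f = 0 from hf, map_zero]

end GMod

/-- For `θ ∈ Θ₊` and a `θ`-stable `G`-constellation `F`, the invariants
`F^G` are one-dimensional and generate `F` as an `A`-module; in particular `F` is a cyclic
`A`-module and `F ≅ A/I` for a `G`-stable ideal `I` (i.e. `F` is the structure sheaf of a
`G`-cluster). -/
theorem stmt0 {n : ℕ} {G : Subgroup (GL (Fin n) ℂ)} [Finite G]
    (θ : IrrChar G → ℚ) (hθ : IsThetaPlus G θ)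
    {F : Type} [AddCommGroup F] [Module ℂ F] (M : GMod n G F)
    (hcon : M.IsConstellation) (hstab : M.IsStable θ) :
    Module.finrank ℂ ↥(M.invariants) = 1 ∧
    M.aspan (M.invariants : Set F) = ⊤ ∧
    (∃ v : F, M.aspan {v} = ⊤) ∧
    (∃ I : Ideal (MvPolynomial (Fin n) ℂ),
      (∀ (g : G) (f : MvPolynomial (Fin n) ℂ), f ∈ I → polyAct (g : GL (Fin n) ℂ) f ∈ I) ∧
      ∃ π : MvPolynomial (Fin n) ℂ →ₗ[ℂ] F,
        (∀ f a : MvPolynomial (Fin n) ℂ, π (f * a) = M.actA f (π a)) ∧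
        (∀ (g : G) (f : MvPolynomial (Fin n) ℂ),
          π (polyAct (g : GL (Fin n) ℂ) f) = M.actG g (π f)) ∧
        Function.Surjective π ∧
        (∀ f : MvPolynomial (Fin n) ℂ, f ∈ I ↔ π f = 0)) := by
  cases nonempty_fintype G
  obtain ⟨v, hv, hinv⟩ := M.exists_invariants_eq_span_singleton hcon
  have hvG : v ∈ M.invariants := hinv ▸ Submodule.mem_span_singleton_self v
  have htop := M.aspan_invariants_eq_top hθ hcon hstab
  have hcyclic : M.aspan {v} = ⊤ := by rw [← M.aspan_span_singleton, ← hinv, htop]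
  refine ⟨by rw [hinv, finrank_span_singleton hv], htop, ⟨v, hcyclic⟩, M.annihilator v,
    fun g _ => M.polyAct_mem_annihilator hvG g, M.toSpanSingleton v, M.toSpanSingleton_mul v,
    M.toSpanSingleton_polyAct hvG, ?_, fun _ => Iff.rfl⟩
  rw [← LinearMap.range_eq_top, M.range_toSpanSingleton, hcyclic]
end

section
/- Let n = 3 and let G ⊆ SL(3,ℂ) be a finite abelian subgroup. Let θ, θ₀ ∈ Θ and let F be a θ-stable G-constellation such that θ₀(E) ≥ 0 for every G-submodule E of F. Let A₁ ⊆ Irr(G) be a nonempty proper subset with θ₀(A₁) = 0, and suppose that A₁ and its complement Irr(G)∖A₁ are the only nonempty proper subsets A ⊆ Irr(G) with θ₀(A) = 0. If S and S′ are G-submodules of F whose underlying G-representations are both ⊕_{ρ∈A₁} ρ, then S = S′. -/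
/-!
Common setup: `G`-constellations for a finite subgroup `G ⊆ GL(n,ℂ)`.

* `polyAct g` is the action of `g ∈ GL(n,ℂ)` on the polynomial ring
  `A = ℂ[x₁,…,xₙ]` given by `(g·f)(x) = f(g⁻¹·x)`.
* `GMod n G F` is a `G`-equivariant `A`-module structure on the ℂ-vector space `F`:
  an `A`-module structure `actA` (as a ℂ-algebra map `A →ₐ End ℂ F`), a `G`-action
  `actG` by ℂ-linear automorphisms, and the compatibility `g·(f·v) = (g·f)·(g·v)`.
* `IrrChar G` is the set of irreducible complex characters of `G`.
* `multChar ρ χ` is the multiplicity `m_ρ` read off from a character `χ`,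
  `thetaOfChar θ χ = Σ_ρ m_ρ(χ)·θ(ρ)`.
* `IsThetaParam G θ` says `θ ∈ Θ`, i.e. `Σ_ρ (dim ρ)·θ(ρ) = 0`;
  `IsThetaPlus G θ` says `θ ∈ Θ₊`.
* `M.IsSub E` says the ℂ-subspace `E` is a `G`-submodule; `M.subChar E h` is the
  character of the induced `G`-representation on `E`.
* `M.IsConstellation` : `F` is finite dimensional and isomorphic, as a
  `ℂ[G]`-module, to the regular representation `Map(G,ℂ)`.
* `M.IsStable θ` / `M.IsSemistable θ` : `θ(E) > 0` (resp. `≥ 0`) for every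
  `G`-submodule `0 ≠ E ≠ F`.
* `IsGHom M M' φ` : `φ` is simultaneously `A`-linear and `G`-equivariant.
-/

open CategoryTheory

/-!
Because `G` is abelian, its regular representation is multiplicity free, so a `G`-stable
subspace `T` of it is determined by its character. Averaging any projection onto `T` over `G`
gives a `G`-equivariant projection `P` with range `T`. An equivariant endomorphism of the
regular representation is determined by `u = P δ₁`, where `δ₁` is the basis vector at `1`,
and `tr (g ∘ P) = |G| · u (g⁻¹)` since `G` is abelian; the left side is the character of `T`
at `g`, so the character determines `P` and hence `T`.
-/

theorem LinearMap.IsProj.trace_restrict {R M : Type*} [CommRing R] [IsDomain R]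
    [IsPrincipalIdealRing R] [AddCommGroup M] [Module R M] [Module.Finite R M] [Module.Free R M]
    {p : Submodule R M} {P : M →ₗ[R] M} (hP : IsProj p P) (f : M →ₗ[R] M)
    (hf : ∀ x ∈ p, f x ∈ p) :
    LinearMap.trace R p (f.restrict hf) = LinearMap.trace R M (f ∘ₗ P) := by
  rw [← trace_restrict_eq_of_forall_mem p (f ∘ₗ P) fun x => hf _ (hP.map_mem x)]
  congr 1
  ext x
  simp [hP.map_id x x.2]

namespace Representation

section Group

variable {k G V : Type*} [Field k] [Group G] [AddCommGroup V] [Module k V]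

theorem exists_isProj_isIntertwiningMap [Fintype G] [Invertible (Fintype.card G : k)]
    (ρ : Representation k G V) {T : Submodule k V} (hT : ∀ g, T ≤ T.comap (ρ g)) :
    ∃ P : V →ₗ[k] V, LinearMap.IsProj T P ∧ ρ.IsIntertwiningMap ρ P := by
  obtain ⟨C, hC⟩ := T.exists_isCompl
  set π := T.projection C hC
  have hP : ∀ v, (linHom ρ ρ).averageMap π v =
      ⅟(Fintype.card G : k) • ∑ g : G, ρ g (π (ρ g⁻¹ v)) := by
    simp [GroupAlgebra.average, map_sum]
  refine ⟨(linHom ρ ρ).averageMap π, ⟨fun v => ?_, fun v hv => ?_⟩,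
    (mem_linHom_invariants_iff_isIntertwining _).1 ((linHom ρ ρ).averageMap_invariant π)⟩
  · rw [hP]
    exact T.smul_mem _ (T.sum_mem fun g _ => hT g (T.projection_apply_mem hC _))
  · have hfix : ∀ g : G, ρ g (π (ρ g⁻¹ v)) = v := fun g => by
      rw [T.projection_apply_of_mem_left hC (hT g⁻¹ hv), ← Module.End.mul_apply, ← map_mul,
        mul_inv_cancel, map_one, Module.End.one_apply]
    rw [hP, Finset.sum_congr rfl fun g _ => hfix g, Finset.sum_const, Finset.card_univ,
      ← Nat.cast_smul_eq_nsmul k, smul_smul, invOf_mul_self, one_smul]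

def IsLeftRegularEquiv (ρ : Representation k G V) (e : V ≃ₗ[k] (G → k)) : Prop :=
  ∀ g v h, e (ρ g v) h = e v (g⁻¹ * h)

variable [Finite G] {ρ : Representation k G V} {e : V ≃ₗ[k] (G → k)}

theorem IsLeftRegularEquiv.ofEquivFun_apply (he : ρ.IsLeftRegularEquiv e) (x : G) :
    Module.Basis.ofEquivFun e x = ρ x (Module.Basis.ofEquivFun e 1) := by
  classical
  apply e.injective
  funext h
  simp [he _ _ h, Module.Basis.coe_ofEquivFun, Pi.single_apply, inv_mul_eq_one, eq_comm]

theorem IsLeftRegularEquiv.intertwiningMap_ext {W : Type*} [AddCommGroup W] [Module k W]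
    {σ : Representation k G W} {f f' : V →ₗ[k] W} (he : ρ.IsLeftRegularEquiv e)
    (hf : ρ.IsIntertwiningMap σ f) (hf' : ρ.IsIntertwiningMap σ f')
    (h1 : f (Module.Basis.ofEquivFun e 1) = f' (Module.Basis.ofEquivFun e 1)) : f = f' :=
  (Module.Basis.ofEquivFun e).ext fun x => by
    rw [he.ofEquivFun_apply, hf.isIntertwining, hf'.isIntertwining, h1]

end Group

variable {k G V : Type*} [Field k] [CommGroup G] [Fintype G] [AddCommGroup V] [Module k V]
  {ρ : Representation k G V} {e : V ≃ₗ[k] (G → k)}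

theorem IsLeftRegularEquiv.trace_comp {f : V →ₗ[k] V} (he : ρ.IsLeftRegularEquiv e)
    (hf : ρ.IsIntertwiningMap ρ f) (g : G) :
    LinearMap.trace k V (ρ g ∘ₗ f) = Fintype.card G * e (f (Module.Basis.ofEquivFun e 1)) g⁻¹ := by
  classical
  set b := Module.Basis.ofEquivFun e
  have hdiag : ∀ x, b.repr ((ρ g ∘ₗ f) (b x)) x = e (f (b 1)) g⁻¹ := fun x => by
    rw [LinearMap.comp_apply, he.ofEquivFun_apply, hf.isIntertwining, ← Module.End.mul_apply,
      ← map_mul, Module.Basis.ofEquivFun_repr_apply, he, mul_inv_rev, mul_comm x⁻¹,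
      inv_mul_cancel_right]
  rw [LinearMap.trace_eq_matrix_trace k b, Matrix.trace]
  simp only [Matrix.diag_apply, LinearMap.toMatrix_apply, hdiag, Finset.sum_const,
    Finset.card_univ, nsmul_eq_mul]

theorem IsLeftRegularEquiv.submodule_eq_of_trace_restrict_eq [Invertible (Fintype.card G : k)]
    (he : ρ.IsLeftRegularEquiv e) {T T' : Submodule k V}
    (hT : ∀ g, T ≤ T.comap (ρ g)) (hT' : ∀ g, T' ≤ T'.comap (ρ g))
    (htr : ∀ g, LinearMap.trace k T ((ρ g).restrict (hT g)) =
      LinearMap.trace k T' ((ρ g).restrict (hT' g))) :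
    T = T' := by
  have : Module.Finite k V := Module.Finite.equiv e.symm
  obtain ⟨P, hP, hPρ⟩ := ρ.exists_isProj_isIntertwiningMap hT
  obtain ⟨P', hP', hP'ρ⟩ := ρ.exists_isProj_isIntertwiningMap hT'
  have hvalue : ∀ g, e (P (Module.Basis.ofEquivFun e 1)) g⁻¹ =
      e (P' (Module.Basis.ofEquivFun e 1)) g⁻¹ := fun g => by
    have := htr g
    rw [hP.trace_restrict, hP'.trace_restrict, he.trace_comp hPρ, he.trace_comp hP'ρ] at this
    exact mul_left_cancel₀ (Invertible.ne_zero _) this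
  have hPP' : P = P' := he.intertwiningMap_ext hPρ hP'ρ <|
    e.injective <| funext fun g => by simpa using hvalue g⁻¹
  exact hP.submodule_unique (hPP' ▸ hP')

end Representation

theorem stmt4_general {G : Subgroup (GL (Fin 3) ℂ)} [Finite G]
    (hab : ∀ a b : G, a * b = b * a)
    {F : Type} [AddCommGroup F] [Module ℂ F] (M : GMod 3 G F)
    (hcon : M.IsConstellation)
    (A₁ : Set (IrrChar G))
    (S S' : Submodule ℂ F) (hS : M.IsSub S) (hS' : M.IsSub S')
    (hSchar : ∀ g : G, M.subChar S hS.2 g = ∑ᶠ ρ ∈ A₁, ρ.1 g)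
    (hS'char : ∀ g : G, M.subChar S' hS'.2 g = ∑ᶠ ρ ∈ A₁, ρ.1 g) :
    S = S' := by
  let : CommGroup G := { mul_comm := hab }
  have : Fintype G := Fintype.ofFinite G
  have : Invertible (Fintype.card G : ℂ) := invertibleOfNonzero (by simp)
  obtain ⟨-, e, he⟩ := hcon
  let ρ : Representation ℂ G F := LinearEquiv.automorphismGroup.toLinearMapMonoidHom.comp M.actG
  have hreg : ρ.IsLeftRegularEquiv e := he
  exact hreg.submodule_eq_of_trace_restrict_eq (fun g v => hS.2 g v) (fun g v => hS'.2 g v)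
    fun g => (hSchar g).trans (hS'char g).symm

/-- (`n = 3`, `G ⊆ SL(3,ℂ)` finite abelian.) With `θ, θ₀, F, A₁` as in
Statement 3: if `S` and `S′` are `G`-submodules of `F` whose underlying `G`-representations
are both `⊕_{ρ∈A₁} ρ`, then `S = S′`. -/
theorem stmt4 {G : Subgroup (GL (Fin 3) ℂ)} [Finite G]
    (hab : ∀ a b : G, a * b = b * a)
    (hSL : ∀ g : G, Matrix.det ((g : GL (Fin 3) ℂ) : Matrix (Fin 3) (Fin 3) ℂ) = 1)
    (θ θ₀ : IrrChar G → ℚ) (hθ : IsThetaParam G θ) (hθ₀ : IsThetaParam G θ₀)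
    {F : Type} [AddCommGroup F] [Module ℂ F] (M : GMod 3 G F)
    (hcon : M.IsConstellation) (hstab : M.IsStable θ)
    (hss : ∀ (E : Submodule ℂ F) (hE : M.IsSub E),
      0 ≤ (thetaOfChar θ₀ (M.subChar E hE.2)).re)
    (A₁ : Set (IrrChar G)) (hne : A₁.Nonempty) (hproper : A₁ ≠ Set.univ)
    (hA₁zero : (∑ᶠ ρ ∈ A₁, θ₀ ρ) = 0)
    (honly : ∀ A : Set (IrrChar G), A.Nonempty → A ≠ Set.univ →
      (∑ᶠ ρ ∈ A, θ₀ ρ) = 0 → A = A₁ ∨ A = A₁ᶜ)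
    (S S' : Submodule ℂ F) (hS : M.IsSub S) (hS' : M.IsSub S')
    (hSchar : ∀ g : G, M.subChar S hS.2 g = ∑ᶠ ρ ∈ A₁, ρ.1 g)
    (hS'char : ∀ g : G, M.subChar S' hS'.2 g = ∑ᶠ ρ ∈ A₁, ρ.1 g) :
    S = S' :=
  stmt4_general hab M hcon A₁ S S' hS hS' hSchar hS'char
end

section
/- Let n = 3 and let G ⊆ SL(3,ℂ) be a finite abelian subgroup. Let θ, θ₀ ∈ Θ, let A₁ ⊆ Irr(G) be a nonempty proper subset with θ₀(A₁) = 0, and suppose A₁ and its complement A₂ are the only nonempty proper subsets A ⊆ Irr(G) with θ₀(A) = 0. Let F be a θ-stable G-constellation with θ₀(E) ≥ 0 for every G-submodule E of F. If F is not θ₀-stable, then F possesses a G-submodule S with θ₀(S) = 0 whose underlying G-representation is ⊕_{ρ∈A₁} ρ or ⊕_{ρ∈A₂} ρ, and every such submodule S is itself θ₀-stable. -/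
/-!
Common setup: `G`-constellations for a finite subgroup `G ⊆ GL(n,ℂ)`.

* `polyAct g` is the action of `g ∈ GL(n,ℂ)` on the polynomial ring
  `A = ℂ[x₁,…,xₙ]` given by `(g·f)(x) = f(g⁻¹·x)`.
* `GMod n G F` is a `G`-equivariant `A`-module structure on the ℂ-vector space `F`:
  an `A`-module structure `actA` (as a ℂ-algebra map `A →ₐ End ℂ F`), a `G`-action
  `actG` by ℂ-linear automorphisms, and the compatibility `g·(f·v) = (g·f)·(g·v)`.
* `IrrChar G` is the set of irreducible complex characters of `G`.
* `multChar ρ χ` is the multiplicity `m_ρ` read off from a character `χ`,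
  `thetaOfChar θ χ = Σ_ρ m_ρ(χ)·θ(ρ)`.
* `IsThetaParam G θ` says `θ ∈ Θ`, i.e. `Σ_ρ (dim ρ)·θ(ρ) = 0`;
  `IsThetaPlus G θ` says `θ ∈ Θ₊`.
* `M.IsSub E` says the ℂ-subspace `E` is a `G`-submodule; `M.subChar E h` is the
  character of the induced `G`-representation on `E`.
* `M.IsConstellation` : `F` is finite dimensional and isomorphic, as a
  `ℂ[G]`-module, to the regular representation `Map(G,ℂ)`.
* `M.IsStable θ` / `M.IsSemistable θ` : `θ(E) > 0` (resp. `≥ 0`) for every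
  `G`-submodule `0 ≠ E ≠ F`.
* `IsGHom M M' φ` : `φ` is simultaneously `A`-linear and `G`-equivariant.
-/

open CategoryTheory

/-!
For abelian `G` the regular representation `Map(G, ℂ)` is multiplicity free: each character
`χ` contributes the single eigenline of `h ↦ χ(h⁻¹)` for the translation action. Hence a
`G`-submodule `E` of a constellation is determined by the set `A(E) ⊆ Irr(G)` of characters it
contains, its character is `∑_{ρ ∈ A(E)} ρ`, and `θ(E) = θ(A(E))`. A `θ₀`-destabilising
submodule therefore has `A(E) ∈ {A₁, A₂}`. If `A(S) ∈ {A₁, A₂}` and `0 ≠ E' ⊊ S`, then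
`A(E')` lies strictly inside `A(S)`, so `θ₀(E') = 0` would put a nonempty member of
`{A₁, A₂}` strictly inside another one, which is impossible as `A₁` and `A₂` are disjoint.
-/

open Module
open scoped IsMulCommutative

lemma LinearMap.trace_eq_finsum_of_basis_eigenvectors {K V ι : Type*} [Field K] [AddCommGroup V]
    [Module K V] [Finite ι] (b : Basis ι K V) (f : V →ₗ[K] V) (c : ι → K)
    (hf : ∀ i, f (b i) = c i • b i) : LinearMap.trace K V f = ∑ᶠ i, c i := by
  classical
  have := Fintype.ofFinite ι
  have hdiag : LinearMap.toMatrix b b f = Matrix.diagonal c := by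
    ext i j
    rw [LinearMap.toMatrix_apply, hf, map_smul, b.repr_self, Matrix.diagonal_apply]
    by_cases h : i = j <;> simp [h]
  rw [LinearMap.trace_eq_matrix_trace K b, hdiag, Matrix.trace_diagonal, finsum_eq_sum_of_fintype]

lemma LinearMap.trace_restrict_map_of_injective {R V W : Type*} [CommRing R] [AddCommGroup V]
    [Module R V] [AddCommGroup W] [Module R W] (φ : V →ₗ[R] W) (hφ : Function.Injective φ)
    {f : V →ₗ[R] V} {f' : W →ₗ[R] W} (hcomm : ∀ v, φ (f v) = f' (φ v)) {E : Submodule R V}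
    (hE : ∀ v ∈ E, f v ∈ E) (hE' : ∀ w ∈ E.map φ, f' w ∈ E.map φ) :
    LinearMap.trace R (E.map φ) (f'.restrict hE') = LinearMap.trace R E (f.restrict hE) := by
  let ψ := Submodule.equivMapOfInjective φ hφ E
  rw [← LinearMap.trace_conj' _ ψ]
  congr 1
  ext x
  obtain ⟨y, rfl⟩ := ψ.surjective x
  simp [ψ, LinearEquiv.conj_apply, hcomm]

lemma Set.not_ssubset_of_eq_or_eq_compl {α : Type*} {A B C : Set α} (hB : B = A ∨ B = Aᶜ)
    (hC : C = A ∨ C = Aᶜ) (hBne : B.Nonempty) : ¬B ⊂ C := by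
  intro h
  obtain ⟨x, hx⟩ := hBne
  rcases hB with rfl | rfl <;> rcases hC with rfl | rfl
  · exact h.ne rfl
  · exact h.subset hx hx
  · exact hx (h.subset hx)
  · exact h.ne rfl

section FiniteAbelianDuality

variable {H : Type*} [Group H]

def leftTranslate (g : H) : (H → ℂ) →ₗ[ℂ] H → ℂ := LinearMap.funLeft ℂ ℂ (g⁻¹ * ·)

@[simp] lemma leftTranslate_apply (g : H) (φ : H → ℂ) (h : H) :
    leftTranslate g φ h = φ (g⁻¹ * h) :=
  rfl

def eigenfun (χ : H →* ℂ) : H → ℂ := fun h => χ h⁻¹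

lemma leftTranslate_eigenfun [IsMulCommutative H] (g : H) (χ : H →* ℂ) :
    leftTranslate g (eigenfun χ) = χ g • eigenfun χ := by
  ext h
  simp only [leftTranslate_apply, eigenfun, Pi.smul_apply, smul_eq_mul, mul_inv_rev, inv_inv,
    map_mul, mul_comm]

lemma linearIndependent_eigenfun : LinearIndependent ℂ (eigenfun : (H →* ℂ) → H → ℂ) :=
  (linearIndependent_monoidHom H ℂ).map' (LinearMap.funLeft ℂ ℂ (·⁻¹))
    (LinearMap.ker_eq_bot.mpr (LinearMap.funLeft_injective_of_surjective _ _ _ inv_surjective))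

open scoped Classical in
lemma sum_apply_inv_mul_apply [IsMulCommutative H] [Fintype H] (χ ψ : H →* ℂ) :
    ∑ g, χ g⁻¹ * ψ g = if χ = ψ then (Fintype.card H : ℂ) else 0 := by
  split_ifs with h
  · subst h
    simp [← map_mul, -map_inv]
  · refine sum_hom_units_eq_zero ((χ.comp invMonoidHom) * ψ) fun h1 => h ?_
    ext g
    have hg : χ g⁻¹ * ψ g = 1 := DFunLike.congr_fun h1 g
    have hχ : χ g⁻¹ * χ g = 1 := by rw [← map_mul, inv_mul_cancel, map_one]
    exact mul_left_cancel₀ (left_ne_zero_of_mul_eq_one hχ) (hχ.trans hg.symm)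

variable [IsMulCommutative H] [Finite H]

lemma card_monoidHom_complex : Nat.card (H →* ℂ) = Nat.card H := by
  have : NeZero (Monoid.exponent H : ℂ) := ⟨by exact_mod_cast Monoid.exponent_ne_zero_of_finite⟩
  let toUnits : (H →* ℂ) ≃ (H →* ℂˣ) :=
    ⟨MonoidHom.toHomUnits, (Units.coeHom ℂ).comp, fun _ => by ext; rfl, fun _ => by ext; rfl⟩
  rw [Nat.card_congr toUnits, CommGroup.card_monoidHom_of_hasEnoughRootsOfUnity]

instance : Finite (H →* ℂ) :=
  Nat.finite_of_card_ne_zero (card_monoidHom_complex.trans_ne Nat.card_pos.ne')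

lemma span_range_eigenfun : Submodule.span ℂ (Set.range (eigenfun : (H →* ℂ) → H → ℂ)) = ⊤ := by
  have := Fintype.ofFinite H
  have := Fintype.ofFinite (H →* ℂ)
  refine linearIndependent_eigenfun.span_eq_top_of_card_eq_finrank ?_
  rw [Module.finrank_fintype_fun_eq_card, ← Nat.card_eq_fintype_card,
    ← Nat.card_eq_fintype_card, card_monoidHom_complex]

noncomputable def eigenfunBasis : Basis (H →* ℂ) ℂ (H → ℂ) :=
  .mk linearIndependent_eigenfun span_range_eigenfun.ge

@[simp] lemma coe_eigenfunBasis : ⇑(eigenfunBasis : Basis (H →* ℂ) ℂ (H → ℂ)) = eigenfun :=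
  Basis.coe_mk _ _

end FiniteAbelianDuality

section InvariantSubspaces

variable {H : Type*} [Group H] [IsMulCommutative H]

noncomputable def charProj [Fintype H] (χ : H →* ℂ) : Module.End ℂ (H → ℂ) :=
  (Fintype.card H : ℂ)⁻¹ • ∑ g, χ g⁻¹ • leftTranslate g

lemma charProj_eq [Fintype H] (χ : H →* ℂ) :
    charProj χ = (eigenfunBasis.coord χ).smulRight (eigenfun χ) := by
  classical
  refine eigenfunBasis.ext fun ψ => ?_
  have hcard : (Fintype.card H : ℂ) ≠ 0 := Nat.cast_ne_zero.mpr Fintype.card_ne_zero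
  rw [LinearMap.smulRight_apply, Basis.coord_apply, Basis.repr_self, Finsupp.single_apply]
  simp only [charProj, LinearMap.smul_apply, LinearMap.sum_apply, coe_eigenfunBasis,
    leftTranslate_eigenfun, smul_smul, ← Finset.sum_smul, sum_apply_inv_mul_apply]
  split_ifs with h₁ h₂ h₂
  · rw [h₁, inv_mul_cancel₀ hcard]
  · exact absurd h₁.symm h₂
  · exact absurd h₂.symm h₁
  · simp

def eigenchars (W : Submodule ℂ (H → ℂ)) : Set (H →* ℂ) := eigenfun ⁻¹' W

variable {W : Submodule ℂ (H → ℂ)}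

lemma charProj_mem [Fintype H] (hW : ∀ g, ∀ φ ∈ W, leftTranslate g φ ∈ W) (χ : H →* ℂ) {φ : H → ℂ}
    (hφ : φ ∈ W) : charProj χ φ ∈ W := by
  simp only [charProj, LinearMap.smul_apply, LinearMap.sum_apply]
  exact W.smul_mem _ (W.sum_mem fun g _ => W.smul_mem _ (hW g φ hφ))

lemma span_eigenfun_eigenchars [Finite H] (hW : ∀ g, ∀ φ ∈ W, leftTranslate g φ ∈ W) :
    Submodule.span ℂ (eigenfun '' eigenchars W) = W := by
  have := Fintype.ofFinite H
  refine le_antisymm (Submodule.span_le.mpr (Set.image_preimage_subset _ _)) fun φ hφ => ?_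
  rw [← eigenfunBasis.linearCombination_repr φ, coe_eigenfunBasis]
  refine (Finsupp.mem_span_image_iff_linearCombination ℂ).mpr ⟨_, fun χ hχ => ?_, rfl⟩
  have hc : eigenfunBasis.repr φ χ ≠ 0 := Finsupp.mem_support_iff.mp hχ
  have hproj := charProj_mem hW χ hφ
  rw [charProj_eq, LinearMap.smulRight_apply, Basis.coord_apply] at hproj
  exact (W.smul_mem_iff hc).mp hproj

lemma trace_restrict_leftTranslate [Finite H] (hW : ∀ g, ∀ φ ∈ W, leftTranslate g φ ∈ W) (g : H) :
    LinearMap.trace ℂ W ((leftTranslate g).restrict (hW g)) = ∑ᶠ χ ∈ eigenchars W, χ g := by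
  have hli : LinearIndependent ℂ fun χ : eigenchars W => eigenfun (χ : H →* ℂ) :=
    linearIndependent_eigenfun.comp _ Subtype.val_injective
  have hspan : Submodule.span ℂ (Set.range fun χ : eigenchars W => eigenfun (χ : H →* ℂ)) = W := by
    rw [← Set.image_eq_range, span_eigenfun_eigenchars hW]
  rw [← finsum_set_coe_eq_finsum_mem]
  refine LinearMap.trace_eq_finsum_of_basis_eigenvectors
    ((Basis.span hli).map (LinearEquiv.ofEq _ _ hspan)) _ _ fun χ => Subtype.ext ?_
  simp [Basis.span_apply, leftTranslate_eigenfun]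

end InvariantSubspaces

section OneDimensionalRep

variable {H : Type} [Group H]

noncomputable def FDRep.ofMonoidHom (χ : H →* ℂ) : FDRep ℂ H :=
  FDRep.of ((algebraMap ℂ (Module.End ℂ ℂ)).toMonoidHom.comp χ)

@[simp] lemma FDRep.character_ofMonoidHom (χ : H →* ℂ) : (FDRep.ofMonoidHom χ).character = χ := by
  ext g
  change LinearMap.trace ℂ ℂ (algebraMap ℂ (Module.End ℂ ℂ) (χ g)) = χ g
  simp [Algebra.algebraMap_eq_smul_one]

instance FDRep.simple_ofMonoidHom [Fintype H] (χ : H →* ℂ) :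
    CategoryTheory.Simple (FDRep.ofMonoidHom χ) := by
  rw [FDRep.simple_iff_char_is_norm_one, character_ofMonoidHom, Nat.card_eq_fintype_card]
  simp [← map_mul, -map_inv]

end OneDimensionalRep

namespace IrrChar

variable {n : ℕ} {G : Subgroup (GL (Fin n) ℂ)} [Finite G]

noncomputable def ofMonoidHom (χ : G →* ℂ) : IrrChar G :=
  have := Fintype.ofFinite G
  ⟨χ, FDRep.ofMonoidHom χ, FDRep.simple_ofMonoidHom χ, by simp⟩

@[simp] lemma coe_ofMonoidHom (χ : G →* ℂ) : (ofMonoidHom χ).1 = χ := rfl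

lemma ofMonoidHom_injective : Function.Injective (ofMonoidHom : (G →* ℂ) → IrrChar G) :=
  fun _ _ h => DFunLike.coe_injective (congrArg Subtype.val h)

variable [IsMulCommutative G]

/-- An irreducible character different from every `χ : G →* ℂ` would be orthogonal to all of
them, hence, as the `eigenfun χ` form a basis, to every function, in particular to itself. -/
lemma ofMonoidHom_surjective : Function.Surjective (ofMonoidHom : (G →* ℂ) → IrrChar G) := by
  have := Fintype.ofFinite G
  rintro ⟨f, V, hV, hf⟩
  obtain rfl : V.character = f := funext hf
  by_contra! hne
  have horth (χ : G →* ℂ) : ∑ g, V.character g * eigenfun χ g = 0 := by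
    have : Invertible (Nat.card G : ℂ) := invertibleOfNonzero (NeZero.ne _)
    have h := FDRep.char_orthonormal V (FDRep.ofMonoidHom χ)
    rw [if_neg fun ⟨i⟩ => hne χ (Subtype.ext (by simpa using (FDRep.char_iso i).symm)),
      FDRep.character_ofMonoidHom, mul_eq_zero] at h
    exact h.resolve_left (inv_ne_zero (NeZero.ne _))
  let L : (G → ℂ) →ₗ[ℂ] ℂ := ∑ g, V.character g • LinearMap.proj g
  have hL : L = 0 := eigenfunBasis.ext fun χ => by simpa [L] using horth χ
  have hnorm := (FDRep.simple_iff_char_is_norm_one V).mp hV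
  have hself := LinearMap.congr_fun hL fun g => V.character g⁻¹
  simp only [L, LinearMap.sum_apply, LinearMap.smul_apply, LinearMap.proj_apply, smul_eq_mul,
    hnorm, LinearMap.zero_apply] at hself
  exact NeZero.ne _ hself

instance : Finite (IrrChar G) := Finite.of_surjective _ ofMonoidHom_surjective

open scoped Classical in
lemma multChar_orthonormal (ρ σ : IrrChar G) : multChar ρ σ.1 = if ρ = σ then 1 else 0 := by
  have := Fintype.ofFinite G
  obtain ⟨χ, rfl⟩ := ofMonoidHom_surjective ρ
  obtain ⟨ψ, rfl⟩ := ofMonoidHom_surjective σ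
  rw [multChar, finsum_eq_sum_of_fintype, coe_ofMonoidHom, coe_ofMonoidHom, sum_apply_inv_mul_apply,
    ofMonoidHom_injective.eq_iff, Nat.card_eq_fintype_card]
  split_ifs
  · exact inv_mul_cancel₀ (Nat.cast_ne_zero.mpr Fintype.card_ne_zero)
  · exact mul_zero _

open scoped Classical in
lemma multChar_finsum (ρ : IrrChar G) (A : Set (IrrChar G)) :
    multChar ρ (fun g => ∑ᶠ σ ∈ A, σ.1 g) = if ρ ∈ A then 1 else 0 := by
  have := Fintype.ofFinite G
  have := Fintype.ofFinite (IrrChar G)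
  calc multChar ρ (fun g => ∑ᶠ σ ∈ A, σ.1 g) = ∑ σ ∈ A.toFinset, multChar ρ σ.1 := by
        simp_rw [finsum_mem_eq_toFinset_sum]
        simp only [multChar, finsum_eq_sum_of_fintype, Finset.mul_sum]
        rw [Finset.sum_comm]
    _ = if ρ ∈ A then 1 else 0 := by simp [multChar_orthonormal]

lemma thetaOfChar_finsum (θ : IrrChar G → ℚ) (A : Set (IrrChar G)) :
    thetaOfChar θ (fun g => ∑ᶠ σ ∈ A, σ.1 g) = ((∑ᶠ ρ ∈ A, θ ρ : ℚ) : ℂ) := by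
  classical
  have := Fintype.ofFinite (IrrChar G)
  rw [thetaOfChar, finsum_eq_sum_of_fintype, finsum_mem_eq_toFinset_sum]
  simp_rw [multChar_finsum, ite_mul, one_mul, zero_mul]
  rw [Finset.sum_ite, Finset.sum_const_zero, add_zero, Rat.cast_sum]
  congr 1
  ext ρ
  simp

lemma eq_of_finsum_eq {A B : Set (IrrChar G)}
    (h : ∀ g, ∑ᶠ ρ ∈ A, ρ.1 g = ∑ᶠ ρ ∈ B, ρ.1 g) : A = B := by
  classical
  ext ρ
  have := congrArg (multChar ρ) (funext h)
  rw [multChar_finsum, multChar_finsum] at this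
  split_ifs at this <;> simp_all

end IrrChar

section IrrSupport

variable {n : ℕ} {G : Subgroup (GL (Fin n) ℂ)} [Finite G] [IsMulCommutative G]

noncomputable def irrSupport (W : Submodule ℂ (G → ℂ)) : Set (IrrChar G) :=
  IrrChar.ofMonoidHom '' eigenchars W

variable {W W' : Submodule ℂ (G → ℂ)}

lemma trace_restrict_leftTranslate_eq_finsum_irrSupport
    (hW : ∀ g, ∀ φ ∈ W, leftTranslate g φ ∈ W) (g : G) :
    LinearMap.trace ℂ W ((leftTranslate g).restrict (hW g)) = ∑ᶠ ρ ∈ irrSupport W, ρ.1 g := by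
  rw [trace_restrict_leftTranslate, irrSupport,
    finsum_mem_image IrrChar.ofMonoidHom_injective.injOn]
  rfl

lemma irrSupport_nonempty (hW : ∀ g, ∀ φ ∈ W, leftTranslate g φ ∈ W) (h : W ≠ ⊥) :
    (irrSupport W).Nonempty := by
  rw [irrSupport, Set.image_nonempty, Set.nonempty_iff_ne_empty]
  intro hempty
  rw [← span_eigenfun_eigenchars hW, hempty, Set.image_empty, Submodule.span_empty] at h
  exact h rfl

lemma irrSupport_ne_univ (hW : ∀ g, ∀ φ ∈ W, leftTranslate g φ ∈ W) (h : W ≠ ⊤) :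
    irrSupport W ≠ Set.univ := by
  intro huniv
  rw [irrSupport, ← Set.image_univ_of_surjective IrrChar.ofMonoidHom_surjective] at huniv
  rw [← span_eigenfun_eigenchars hW, Set.image_injective.mpr IrrChar.ofMonoidHom_injective huniv,
    Set.image_univ, span_range_eigenfun] at h
  exact h rfl

lemma irrSupport_ssubset (hW : ∀ g, ∀ φ ∈ W, leftTranslate g φ ∈ W)
    (hW' : ∀ g, ∀ φ ∈ W', leftTranslate g φ ∈ W') (h : W < W') :
    irrSupport W ⊂ irrSupport W' := by
  refine IrrChar.ofMonoidHom_injective.image_strictMono (Set.ssubset_iff_subset_ne.mpr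
    ⟨Set.preimage_mono h.le, fun heq => h.ne ?_⟩)
  rw [← span_eigenfun_eigenchars hW, ← span_eigenfun_eigenchars hW', heq]

end IrrSupport

namespace GMod

variable {n : ℕ} {G : Subgroup (GL (Fin n) ℂ)} {F F' : Type}
  [AddCommGroup F] [Module ℂ F] [AddCommGroup F'] [Module ℂ F']

lemma IsSub.map {M : GMod n G F} {M' : GMod n G F'} {ι : F →ₗ[ℂ] F'} (hι : IsGHom M M' ι)
    {E : Submodule ℂ F} (hE : M.IsSub E) : M'.IsSub (E.map ι) := by
  constructor
  · rintro f _ ⟨v, hv, rfl⟩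
    exact ⟨_, hE.1 f v hv, hι.1 f v⟩
  · rintro g _ ⟨v, hv, rfl⟩
    exact ⟨_, hE.2 g v hv, hι.2 g v⟩

lemma subChar_map_of_injective {M : GMod n G F} {M' : GMod n G F'} {ι : F →ₗ[ℂ] F'}
    (hι : ∀ g v, ι (M.actG g v) = M'.actG g (ι v)) (hinj : Function.Injective ι)
    {E : Submodule ℂ F} (hE : ∀ g v, v ∈ E → M.actG g v ∈ E)
    (hE' : ∀ g v, v ∈ E.map ι → M'.actG g v ∈ E.map ι) :
    M'.subChar (E.map ι) hE' = M.subChar E hE :=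
  funext fun g => LinearMap.trace_restrict_map_of_injective ι hinj (hι g) _ _

variable (M : GMod n G F) {e : F ≃ₗ[ℂ] (G → ℂ)} (he : ∀ g v h, e (M.actG g v) h = e v (g⁻¹ * h))
include he

lemma leftTranslate_mem_map {E : Submodule ℂ F} (hE : ∀ g v, v ∈ E → M.actG g v ∈ E) (g : G) :
    ∀ φ ∈ E.map e.toLinearMap, leftTranslate g φ ∈ E.map e.toLinearMap := by
  rintro _ ⟨v, hv, rfl⟩
  exact ⟨_, hE g v hv, funext (he g v)⟩

variable [Finite G] [IsMulCommutative G]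

lemma subChar_eq_finsum_irrSupport {E : Submodule ℂ F} (hE : ∀ g v, v ∈ E → M.actG g v ∈ E) :
    M.subChar E hE = fun g => ∑ᶠ ρ ∈ irrSupport (E.map e.toLinearMap), ρ.1 g := by
  funext g
  rw [← trace_restrict_leftTranslate_eq_finsum_irrSupport (M.leftTranslate_mem_map he hE)]
  exact (LinearMap.trace_restrict_map_of_injective e.toLinearMap e.injective
    (fun v => funext (he g v)) _ _).symm

lemma subChar_eq_finsum_iff {E : Submodule ℂ F} (hE : ∀ g v, v ∈ E → M.actG g v ∈ E)
    (A : Set (IrrChar G)) :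
    (∀ g, M.subChar E hE g = ∑ᶠ ρ ∈ A, ρ.1 g) ↔ irrSupport (E.map e.toLinearMap) = A := by
  rw [M.subChar_eq_finsum_irrSupport he]
  exact ⟨IrrChar.eq_of_finsum_eq, fun h g => by rw [h]⟩

lemma thetaOfChar_subChar {E : Submodule ℂ F} (hE : ∀ g v, v ∈ E → M.actG g v ∈ E)
    (θ : IrrChar G → ℚ) :
    thetaOfChar θ (M.subChar E hE) = ((∑ᶠ ρ ∈ irrSupport (E.map e.toLinearMap), θ ρ : ℚ) : ℂ) := by
  rw [M.subChar_eq_finsum_irrSupport he, IrrChar.thetaOfChar_finsum]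

lemma irrSupport_map_nonempty {E : Submodule ℂ F} (hE : ∀ g v, v ∈ E → M.actG g v ∈ E)
    (h : E ≠ ⊥) : (irrSupport (E.map e.toLinearMap)).Nonempty :=
  irrSupport_nonempty (M.leftTranslate_mem_map he hE) (by rwa [Ne, Submodule.map_eq_bot_iff])

lemma irrSupport_map_ne_univ {E : Submodule ℂ F} (hE : ∀ g v, v ∈ E → M.actG g v ∈ E)
    (h : E ≠ ⊤) : irrSupport (E.map e.toLinearMap) ≠ Set.univ :=
  irrSupport_ne_univ (M.leftTranslate_mem_map he hE) (by rwa [Ne, Submodule.map_eq_top_iff])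

lemma irrSupport_map_ssubset {E E' : Submodule ℂ F} (hE : ∀ g v, v ∈ E → M.actG g v ∈ E)
    (hE' : ∀ g v, v ∈ E' → M.actG g v ∈ E') (h : E < E') :
    irrSupport (E.map e.toLinearMap) ⊂ irrSupport (E'.map e.toLinearMap) :=
  irrSupport_ssubset (M.leftTranslate_mem_map he hE) (M.leftTranslate_mem_map he hE')
    (Submodule.map_strictMono_of_injective e.injective h)

lemma irrSupport_eq_or_eq_compl {θ₀ : IrrChar G → ℚ} {A₁ : Set (IrrChar G)}
    (honly : ∀ A : Set (IrrChar G), A.Nonempty → A ≠ Set.univ →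
      (∑ᶠ ρ ∈ A, θ₀ ρ) = 0 → A = A₁ ∨ A = A₁ᶜ)
    {E : Submodule ℂ F} (hE : ∀ g v, v ∈ E → M.actG g v ∈ E) (hbot : E ≠ ⊥) (htop : E ≠ ⊤)
    (h0 : (thetaOfChar θ₀ (M.subChar E hE)).re = 0) :
    irrSupport (E.map e.toLinearMap) = A₁ ∨ irrSupport (E.map e.toLinearMap) = A₁ᶜ := by
  rw [M.thetaOfChar_subChar he] at h0
  exact honly _ (M.irrSupport_map_nonempty he hE hbot) (M.irrSupport_map_ne_univ he hE htop)
    (by exact_mod_cast h0)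

end GMod

theorem stmt6_general {G : Subgroup (GL (Fin 3) ℂ)} [Finite G]
    (hab : ∀ a b : G, a * b = b * a)
    (θ₀ : IrrChar G → ℚ)
    (A₁ : Set (IrrChar G))
    (honly : ∀ A : Set (IrrChar G), A.Nonempty → A ≠ Set.univ →
      (∑ᶠ ρ ∈ A, θ₀ ρ) = 0 → A = A₁ ∨ A = A₁ᶜ)
    {F : Type} [AddCommGroup F] [Module ℂ F] (M : GMod 3 G F)
    (hcon : M.IsConstellation)
    (hss : ∀ (E : Submodule ℂ F) (hE : M.IsSub E),
      0 ≤ (thetaOfChar θ₀ (M.subChar E hE.2)).re)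
    (hnot : ¬ M.IsStable θ₀) :
    (∃ (S : Submodule ℂ F) (hS : M.IsSub S),
      thetaOfChar θ₀ (M.subChar S hS.2) = 0 ∧
      ((∀ g : G, M.subChar S hS.2 g = ∑ᶠ ρ ∈ A₁, ρ.1 g) ∨
       (∀ g : G, M.subChar S hS.2 g = ∑ᶠ ρ ∈ A₁ᶜ, ρ.1 g))) ∧
    (∀ (S : Submodule ℂ F) (hS : M.IsSub S),
      thetaOfChar θ₀ (M.subChar S hS.2) = 0 →
      ((∀ g : G, M.subChar S hS.2 g = ∑ᶠ ρ ∈ A₁, ρ.1 g) ∨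
       (∀ g : G, M.subChar S hS.2 g = ∑ᶠ ρ ∈ A₁ᶜ, ρ.1 g)) →
      ∀ (S' : Type) [AddCommGroup S'] [Module ℂ S'] (MS : GMod 3 G S')
        (ι : S' →ₗ[ℂ] F), IsGHom MS M ι → Function.Injective ι →
        LinearMap.range ι = S → MS.IsStable θ₀) := by
  obtain ⟨-, e, he⟩ := hcon
  have : IsMulCommutative G := ⟨⟨hab⟩⟩
  simp only [GMod.IsStable, not_forall, not_lt] at hnot
  obtain ⟨E, hE, hbot, htop, hle⟩ := hnot
  have h0 := le_antisymm hle (hss E hE)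
  refine ⟨⟨E, hE, ?_, ?_⟩, ?_⟩
  · rw [M.thetaOfChar_subChar he] at h0 ⊢
    exact_mod_cast h0
  · simpa only [M.subChar_eq_finsum_iff he] using
      M.irrSupport_eq_or_eq_compl he honly hE.2 hbot htop h0
  intro S hS _ hSchar S' _ _ MS ι hι hinj hrange E' hE' hbot' htop'
  have hE'' := hE'.map hι
  rw [← GMod.subChar_map_of_injective hι.2 hinj hE'.2 hE''.2]
  refine (hss _ hE'').lt_of_ne fun h0' => ?_
  have hlt : E'.map ι < S := by
    rw [← hrange, LinearMap.range_eq_map]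
    exact Submodule.map_strictMono_of_injective hinj (lt_top_iff_ne_top.mpr htop')
  have hbot'' : E'.map ι ≠ ⊥ := by
    rwa [Ne, ← Submodule.map_bot ι, (Submodule.map_injective_of_injective hinj).eq_iff]
  exact Set.not_ssubset_of_eq_or_eq_compl
    (M.irrSupport_eq_or_eq_compl he honly hE''.2 hbot'' (hlt.trans_le le_top).ne h0'.symm)
    (hSchar.imp (M.subChar_eq_finsum_iff he hS.2 _).mp (M.subChar_eq_finsum_iff he hS.2 _).mp)
    (M.irrSupport_map_nonempty he hE''.2 hbot'') (M.irrSupport_map_ssubset he hE''.2 hS.2 hlt)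

/-- (`n = 3`, `G ⊆ SL(3,ℂ)` finite abelian.) With `θ, θ₀, A₁` as before,
let `F` be a `θ`-stable `G`-constellation with `θ₀(E) ≥ 0` for every `G`-submodule `E`.
If `F` is not `θ₀`-stable, then `F` has a `G`-submodule `S` with `θ₀(S) = 0` whose
underlying `G`-representation is `⊕_{ρ∈A₁} ρ` or `⊕_{ρ∈A₂} ρ`, and every such submodule
(realised by any injective `G`-equivariant `A`-linear map) is itself `θ₀`-stable. -/
theorem stmt6 {G : Subgroup (GL (Fin 3) ℂ)} [Finite G]
    (hab : ∀ a b : G, a * b = b * a)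
    (hSL : ∀ g : G, Matrix.det ((g : GL (Fin 3) ℂ) : Matrix (Fin 3) (Fin 3) ℂ) = 1)
    (θ θ₀ : IrrChar G → ℚ) (hθ : IsThetaParam G θ) (hθ₀ : IsThetaParam G θ₀)
    (A₁ : Set (IrrChar G)) (hne : A₁.Nonempty) (hproper : A₁ ≠ Set.univ)
    (hA₁zero : (∑ᶠ ρ ∈ A₁, θ₀ ρ) = 0)
    (honly : ∀ A : Set (IrrChar G), A.Nonempty → A ≠ Set.univ →
      (∑ᶠ ρ ∈ A, θ₀ ρ) = 0 → A = A₁ ∨ A = A₁ᶜ)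
    {F : Type} [AddCommGroup F] [Module ℂ F] (M : GMod 3 G F)
    (hcon : M.IsConstellation) (hstab : M.IsStable θ)
    (hss : ∀ (E : Submodule ℂ F) (hE : M.IsSub E),
      0 ≤ (thetaOfChar θ₀ (M.subChar E hE.2)).re)
    (hnot : ¬ M.IsStable θ₀) :
    (∃ (S : Submodule ℂ F) (hS : M.IsSub S),
      thetaOfChar θ₀ (M.subChar S hS.2) = 0 ∧
      ((∀ g : G, M.subChar S hS.2 g = ∑ᶠ ρ ∈ A₁, ρ.1 g) ∨
       (∀ g : G, M.subChar S hS.2 g = ∑ᶠ ρ ∈ A₁ᶜ, ρ.1 g))) ∧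
    (∀ (S : Submodule ℂ F) (hS : M.IsSub S),
      thetaOfChar θ₀ (M.subChar S hS.2) = 0 →
      ((∀ g : G, M.subChar S hS.2 g = ∑ᶠ ρ ∈ A₁, ρ.1 g) ∨
       (∀ g : G, M.subChar S hS.2 g = ∑ᶠ ρ ∈ A₁ᶜ, ρ.1 g)) →
      ∀ (S' : Type) [AddCommGroup S'] [Module ℂ S'] (MS : GMod 3 G S')
        (ι : S' →ₗ[ℂ] F), IsGHom MS M ι → Function.Injective ι →
        LinearMap.range ι = S → MS.IsStable θ₀) :=
  stmt6_general hab θ₀ A₁ honly M hcon hss hnot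
end

section
/- Let x, x′ ∈ ℂⁿ be points with trivial stabilisers in G. Let F_x := Map(G, ℂ) with A-module structure (f·φ)(g) := f(g·x)·φ(g) and G-action (h·φ)(g) := φ(h⁻¹g), and define F_{x′} analogously using x′. If F_x and F_{x′} are isomorphic as G-equivariant A-modules, then G·x = G·x′. -/
/-!
Common setup: `G`-constellations for a finite subgroup `G ⊆ GL(n,ℂ)`.

* `polyAct g` is the action of `g ∈ GL(n,ℂ)` on the polynomial ring
  `A = ℂ[x₁,…,xₙ]` given by `(g·f)(x) = f(g⁻¹·x)`.
* `GMod n G F` is a `G`-equivariant `A`-module structure on the ℂ-vector space `F`: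
  an `A`-module structure `actA` (as a ℂ-algebra map `A →ₐ End ℂ F`), a `G`-action
  `actG` by ℂ-linear automorphisms, and the compatibility `g·(f·v) = (g·f)·(g·v)`.
* `IrrChar G` is the set of irreducible complex characters of `G`.
* `multChar ρ χ` is the multiplicity `m_ρ` read off from a character `χ`,
  `thetaOfChar θ χ = Σ_ρ m_ρ(χ)·θ(ρ)`.
* `IsThetaParam G θ` says `θ ∈ Θ`, i.e. `Σ_ρ (dim ρ)·θ(ρ) = 0`;
  `IsThetaPlus G θ` says `θ ∈ Θ₊`.
* `M.IsSub E` says the ℂ-subspace `E` is a `G`-submodule; `M.subChar E h` is the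
  character of the induced `G`-representation on `E`.
* `M.IsConstellation` : `F` is finite dimensional and isomorphic, as a
  `ℂ[G]`-module, to the regular representation `Map(G,ℂ)`.
* `M.IsStable θ` / `M.IsSemistable θ` : `θ(E) > 0` (resp. `≥ 0`) for every
  `G`-submodule `0 ≠ E ≠ F`.
* `IsGHom M M' φ` : `φ` is simultaneously `A`-linear and `G`-equivariant.
-/

open CategoryTheory

/-- Let `x, x′ ∈ ℂⁿ` have trivial stabilisers in `G`, and let
`F_x, F_{x′}` be the corresponding `G`-constellations on `Map(G,ℂ)` (as in Statement 14).
If `F_x ≅ F_{x′}` as `G`-equivariant `A`-modules then `G·x = G·x′`. -/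
theorem stmt15 {n : ℕ} {G : Subgroup (GL (Fin n) ℂ)} [Finite G]
    (x x' : Fin n → ℂ)
    (hfree : ∀ g : G,
      ((g : GL (Fin n) ℂ) : Matrix (Fin n) (Fin n) ℂ).mulVec x = x → g = 1)
    (hfree' : ∀ g : G,
      ((g : GL (Fin n) ℂ) : Matrix (Fin n) (Fin n) ℂ).mulVec x' = x' → g = 1)
    (M M' : GMod n G (G → ℂ))
    (hA : ∀ (f : MvPolynomial (Fin n) ℂ) (φ : G → ℂ) (g : G),
      M.actA f φ g =
        MvPolynomial.eval (((g : GL (Fin n) ℂ) : Matrix (Fin n) (Fin n) ℂ).mulVec x) f * φ g)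
    (hG : ∀ (h : G) (φ : G → ℂ) (g : G), M.actG h φ g = φ (h⁻¹ * g))
    (hA' : ∀ (f : MvPolynomial (Fin n) ℂ) (φ : G → ℂ) (g : G),
      M'.actA f φ g =
        MvPolynomial.eval (((g : GL (Fin n) ℂ) : Matrix (Fin n) (Fin n) ℂ).mulVec x') f * φ g)
    (hG' : ∀ (h : G) (φ : G → ℂ) (g : G), M'.actG h φ g = φ (h⁻¹ * g))
    (e : (G → ℂ) →ₗ[ℂ] (G → ℂ)) (he : IsGHom M M' e) (hbij : Function.Bijective e) :
    {y : Fin n → ℂ | ∃ g : G, ((g : GL (Fin n) ℂ) : Matrix (Fin n) (Fin n) ℂ).mulVec x = y}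
    = {y : Fin n → ℂ |
        ∃ g : G, ((g : GL (Fin n) ℂ) : Matrix (Fin n) (Fin n) ℂ).mulVec x' = y} := by
  classical
  set δ : G → ℂ := Pi.single (1 : G) (1 : ℂ) with hδdef
  have hδne : e δ ≠ 0 := by
    intro h0
    have hz : δ = 0 := hbij.1 (by simpa using h0)
    have := congrFun hz 1
    simp [δ, Pi.single_apply] at this
  obtain ⟨h, hh⟩ : ∃ h : G, e δ h ≠ 0 := by
    by_contra hc; push_neg at hc; exact hδne (funext hc)
  have key : ∀ f : MvPolynomial (Fin n) ℂ,
      MvPolynomial.eval x f =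
        MvPolynomial.eval (((h : GL (Fin n) ℂ) : Matrix (Fin n) (Fin n) ℂ).mulVec x') f := by
    intro f
    have h1 : M.actA f δ = MvPolynomial.eval x f • δ := by
      funext g
      rw [hA]
      by_cases hg : g = 1
      · subst hg
        simp [δ, Matrix.one_mulVec]
      · simp [δ, Pi.single_apply, hg]
    have h2 := congrFun (he.1 f δ) h
    rw [h1, hA'] at h2
    simp only [map_smul, Pi.smul_apply, smul_eq_mul] at h2
    exact mul_right_cancel₀ hh h2
  have hx : x = ((h : GL (Fin n) ℂ) : Matrix (Fin n) (Fin n) ℂ).mulVec x' := by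
    funext i
    have := key (MvPolynomial.X i)
    simpa using this
  ext y
  simp only [Set.mem_setOf_eq]
  constructor
  · rintro ⟨g, rfl⟩
    refine ⟨g * h, ?_⟩
    rw [hx]
    simp [Matrix.mulVec_mulVec]
  · rintro ⟨g, rfl⟩
    refine ⟨g * h⁻¹, ?_⟩
    rw [hx, Matrix.mulVec_mulVec, ← Units.val_mul, ← Subgroup.coe_mul]
    simp
end
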